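/- Let an RDS on ℝ be given by a finitely supported measure μ on Homeo⁺(ℝ) satisfying shiftability, and suppose there exists a Radon stationary measure ν̂ for the inverse dynamics that is infinite on neighborhoods of −∞ but finite on half-lines [x, +∞) (a 'semi-infinite' stationary measure). Then for the forward dynamics φ₊ ≡ 1: every random orbit tends to +∞ almost surely. -/

import Mathlib

/-!
For the inverse dynamics, `h y = ν̂ [y, ∞)` is finite, antitone and tends to `∞` at `-∞`, and the
stationarity of `ν̂` says exactly that `h` is harmonic for the forward dynamics:
`∑ μ{i} h (f i y) = h y`. Hence `h (F n x)` is a martingale, and optional stopping at the first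
entrance into `(-∞, c]` gives `P(the orbit ever enters (-∞, c]) ≤ h x / h c`, which tends to `0` as
`c → -∞`.

Conversely, shiftability and compactness of `[c, M]` give one finite word that maps all of
`(-∞, M]` below `c`. Each visit of the orbit to `(-∞, M]` is followed by this word with the same
positive probability, independently of the past, so by Lévy's zero–one law an orbit that returns to
`(-∞, M]` infinitely often almost surely enters `(-∞, c]`. Letting `c → -∞`, almost every orbit
eventually leaves every `(-∞, M]`.
-/

open MeasureTheory ProbabilityTheory Filter Set
open scoped ENNReal Topology

section Levy

variable {Ω : Type*} {m0 : MeasurableSpace Ω} {P : Measure Ω} [IsProbabilityMeasure P]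

lemma ae_condExp_indicator_le_of_indep {m 𝒢 : MeasurableSpace Ω} (hm : m ≤ m0) (h𝒢 : 𝒢 ≤ m0)
    (hindep : Indep 𝒢 m P) {E V W : Set Ω} (hE : MeasurableSet[m0] E) (hV : MeasurableSet[m] V)
    (hW : MeasurableSet[𝒢] W) (hexit : Disjoint (V ∩ W) E) :
    ∀ᵐ ω ∂P, ω ∈ V → P[E.indicator 1 | m] ω ≤ 1 - P.real W := by
  have hle : E.indicator (1 : Ω → ℝ) ≤ 1 - V.indicator (W.indicator 1) := by
    intro ω
    by_cases hω : ω ∈ V ∩ W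
    · simp [indicator_of_mem hω.1, indicator_of_mem hω.2,
        indicator_of_notMem (hexit.notMem_of_mem_left hω)]
    · by_cases hωE : ω ∈ E <;> by_cases hωV : ω ∈ V <;> simp_all
  have hWint : Integrable (W.indicator (1 : Ω → ℝ)) P := (integrable_const 1).indicator (h𝒢 _ hW)
  have hWsm : StronglyMeasurable[𝒢] (W.indicator (1 : Ω → ℝ)) :=
    stronglyMeasurable_const.indicator hW
  have hEint : Integrable (E.indicator (1 : Ω → ℝ)) P := (integrable_const 1).indicator hE
  filter_upwards [condExp_mono (m := m) hEint
      ((integrable_const 1).sub (hWint.indicator (hm _ hV))) (ae_of_all _ hle),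
    condExp_sub (m := m) (integrable_const 1) (hWint.indicator (hm _ hV)),
    condExp_indicator (m := m) hWint hV, condExp_indep_eq h𝒢 hm hWsm hindep]
    with ω hmono hsub hind hconst hω
  rwa [hsub, Pi.sub_apply, hind, indicator_of_mem hω, hconst, integral_indicator_one (h𝒢 _ hW),
    condExp_const hm] at hmono

/-- By Lévy's upward theorem `P[E | ℱ n] → 1` on `E`, whereas `P[E | ℱ n] ≤ 1 - q` on `V n`. -/
lemma ae_eventually_notMem_of_indep {ℱ : Filtration ℕ m0} {𝒢 : ℕ → MeasurableSpace Ω}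
    (h𝒢 : ∀ n, 𝒢 n ≤ m0) (hindep : ∀ n, Indep (𝒢 n) (ℱ n) P) {E : Set Ω}
    (hE : MeasurableSet[⨆ n, ℱ n] E) {V W : ℕ → Set Ω} (hV : ∀ n, MeasurableSet[ℱ n] (V n))
    (hW : ∀ n, MeasurableSet[𝒢 n] (W n)) {q : ℝ} (hq : 0 < q) (hWq : ∀ n, q ≤ P.real (W n))
    (hexit : ∀ n, Disjoint (V n ∩ W n) E) :
    ∀ᵐ ω ∂P, ω ∈ E → ∀ᶠ n in atTop, ω ∉ V n := by
  have hE₀ : MeasurableSet E := iSup_le (fun n => ℱ.le n) _ hE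
  have hbound n := ae_condExp_indicator_le_of_indep (ℱ.le n) (h𝒢 n) (hindep n) hE₀ (hV n) (hW n)
    (hexit n)
  have hEsm : StronglyMeasurable[⨆ n, ℱ n] (E.indicator (1 : Ω → ℝ)) :=
    stronglyMeasurable_const.indicator hE
  have hEint : Integrable (E.indicator (1 : Ω → ℝ)) P := (integrable_const 1).indicator hE₀
  filter_upwards [ae_all_iff.2 hbound, hEint.tendsto_ae_condExp hEsm] with ω hbound hlim hωE
  rw [indicator_of_mem hωE] at hlim
  filter_upwards [hlim.eventually (lt_mem_nhds (by linarith : 1 - q < (1 : ℝ)))] with n hn hV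
  linarith [hbound n hV, hWq n]

end Levy

lemma MeasureTheory.exists_mem_measure_singleton_ne_zero {ι : Type*} [Countable ι]
    [MeasurableSpace ι] [MeasurableSingletonClass ι] {μ : Measure ι} {s : Set ι} (hs : μ s ≠ 0) :
    ∃ i ∈ s, μ {i} ≠ 0 := by
  by_contra! h
  exact hs (biUnion_of_singleton s ▸ (measure_biUnion_null_iff s.to_countable).2 h)

namespace RandomOrbit

variable {ι : Type*} {f : ι → ℝ → ℝ}

def orbit (f : ι → ℝ → ℝ) (u : ℕ → ι) (x : ℝ) : ℕ → ℝ
  | 0 => x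
  | n + 1 => f (u n) (orbit f u x n)

lemma orbit_congr {u v : ℕ → ι} {n : ℕ} (h : ∀ k < n, u k = v k) (x : ℝ) :
    orbit f u x n = orbit f v x n := by
  induction n with
  | zero => rfl
  | succ n ih =>
    simp only [orbit, ih fun k hk => h k (Nat.lt_succ_of_lt hk), h n n.lt_succ_self]

lemma orbit_add (u : ℕ → ι) (x : ℝ) (s n : ℕ) :
    orbit f u x (s + n) = orbit f (fun k => u (s + k)) (orbit f u x s) n := by
  induction n with
  | zero => rfl
  | succ n ih => rw [← add_assoc, orbit, ih, orbit]

lemma monotone_orbit (hf : ∀ i, Monotone (f i)) (u : ℕ → ι) (n : ℕ) :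
    Monotone fun x => orbit f u x n := by
  induction n with
  | zero => exact monotone_id
  | succ n ih => exact fun x y hxy => hf (u n) (ih hxy)

lemma orbit_add_le_of_eq (hf : ∀ i, Monotone (f i)) {u w : ℕ → ι} {n N : ℕ}
    (hw : ∀ j < N, u (n + j) = w j) {x M : ℝ} (hM : orbit f u x n ≤ M) :
    orbit f u x (n + N) ≤ orbit f w M N := by
  rw [orbit_add, orbit_congr hw]
  exact monotone_orbit hf w N hM

lemma exists_uniform_decrease (hf : ∀ i, Continuous (f i)) {S : Finset ι}
    (hS : ∀ y, ∃ i ∈ S, f i y < y) (c M : ℝ) :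
    ∃ δ > 0, ∀ y ∈ Icc c M, ∃ i ∈ S, f i y + δ ≤ y := by
  obtain ⟨i₀, hi₀, -⟩ := hS 0
  have hne : S.Nonempty := ⟨i₀, hi₀⟩
  set d : ℝ → ℝ := fun y => S.sup' hne fun i => y - f i y
  have hd : Continuous d := continuous_iff_continuousAt.2 fun y =>
    ContinuousAt.finset_sup'_apply hne fun i _ => (continuous_id.sub (hf i)).continuousAt
  have hdpos : ∀ y, 0 < d y := fun y => by
    obtain ⟨i, hi, hlt⟩ := hS y
    exact (Finset.lt_sup'_iff hne).2 ⟨i, hi, sub_pos.2 hlt⟩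
  rcases (Icc c M).eq_empty_or_nonempty with hemp | hnemp
  · exact ⟨1, one_pos, by simp [hemp]⟩
  obtain ⟨y₀, -, hy₀⟩ := isCompact_Icc.exists_isMinOn hnemp hd.continuousOn
  refine ⟨d y₀, hdpos y₀, fun y hy => ?_⟩
  obtain ⟨i, hi, hieq⟩ := Finset.exists_mem_eq_sup' hne fun i => y - f i y
  have : d y₀ ≤ d y := hy₀ hy
  exact ⟨i, hi, by simp only [d] at this; linarith⟩

lemma exists_orbit_lt (hf : ∀ i, Continuous (f i)) {S : Finset ι}
    (hS : ∀ y, ∃ i ∈ S, f i y < y) (c M : ℝ) :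
    ∃ (w : ℕ → ι) (N : ℕ), (∀ j, w j ∈ S) ∧ orbit f w M N < c := by
  obtain ⟨δ, hδ, hdec⟩ := exists_uniform_decrease hf hS c M
  obtain ⟨i₀, hi₀, -⟩ := hS 0
  suffices key : ∀ k : ℕ, ∃ (w : ℕ → ι) (N : ℕ), (∀ j, w j ∈ S) ∧
      (orbit f w M N < c ∨ orbit f w M N ≤ M - k * δ) by
    obtain ⟨k, hk⟩ := exists_nat_gt ((M - c) / δ)
    obtain ⟨w, N, hw, hlt | hle⟩ := key k
    · exact ⟨w, N, hw, hlt⟩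
    · exact ⟨w, N, hw, hle.trans_lt (by rw [div_lt_iff₀ hδ] at hk; linarith)⟩
  intro k
  induction k with
  | zero => exact ⟨fun _ => i₀, 0, fun _ => hi₀, Or.inr (by simp [orbit])⟩
  | succ k ih =>
    obtain ⟨w, N, hw, hlt | hle⟩ := ih
    · exact ⟨w, N, hw, Or.inl hlt⟩
    set y := orbit f w M N
    rcases lt_or_ge y c with hyc | hyc
    · exact ⟨w, N, hw, Or.inl hyc⟩
    obtain ⟨i, hi, hiy⟩ := hdec y ⟨hyc, hle.trans (sub_le_self _ (by positivity))⟩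
    refine ⟨Function.update w N i, N + 1, fun j => ?_, Or.inr ?_⟩
    · rcases eq_or_ne j N with rfl | hj <;> simp [*]
    · have hprefix : orbit f (Function.update w N i) M N = y :=
        orbit_congr (fun k hk => Function.update_of_ne hk.ne _ _) M
      simp only [orbit, hprefix, Function.update_self]
      push_cast
      linarith

def IsHarmonic [Fintype ι] [MeasurableSpace ι] (μ : Measure ι) (f : ι → ℝ → ℝ)
    (h : ℝ → ℝ≥0∞) : Prop :=
  ∀ y, ∑ i, μ {i} * h (f i y) = h y

/-- The orbit of these maps is the orbit of `f` stopped on entering `Iic c`. -/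
noncomputable def stopBelow (f : ι → ℝ → ℝ) (c : ℝ) (i : ι) (y : ℝ) : ℝ :=
  if y ≤ c then y else f i y

lemma orbit_stopBelow_of_forall_lt {c : ℝ} {u : ℕ → ι} {x : ℝ} {n : ℕ}
    (h : ∀ k < n, c < orbit f u x k) : orbit (stopBelow f c) u x n = orbit f u x n := by
  induction n with
  | zero => rfl
  | succ n ih =>
    rw [orbit, orbit, ih fun k hk => h k (Nat.lt_succ_of_lt hk), stopBelow,
      if_neg (not_le.2 (h n n.lt_succ_self))]

lemma orbit_stopBelow_le_of_le {c : ℝ} {u : ℕ → ι} {x : ℝ} {k n : ℕ}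
    (hk : orbit (stopBelow f c) u x k ≤ c) (hkn : k ≤ n) : orbit (stopBelow f c) u x n ≤ c := by
  induction n, hkn using Nat.le_induction with
  | base => exact hk
  | succ n _ ih => rwa [orbit, stopBelow, if_pos ih]

lemma orbit_stopBelow_le {c : ℝ} {u : ℕ → ι} {x : ℝ} {n : ℕ}
    (h : ∃ k ≤ n, orbit f u x k ≤ c) : orbit (stopBelow f c) u x n ≤ c := by
  obtain ⟨k, hkn, hk⟩ := h
  have hfirst : ∃ k, orbit f u x k ≤ c := ⟨k, hk⟩
  refine orbit_stopBelow_le_of_le ?_ ((Nat.find_min' hfirst hk).trans hkn)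
  rw [orbit_stopBelow_of_forall_lt fun j hj => not_le.1 (Nat.find_min hfirst hj)]
  exact Nat.find_spec hfirst

lemma isHarmonic_stopBelow [Fintype ι] [MeasurableSpace ι] [MeasurableSingletonClass ι]
    {μ : Measure ι} [IsProbabilityMeasure μ] {h : ℝ → ℝ≥0∞} (hharm : IsHarmonic μ f h) (c : ℝ) :
    IsHarmonic μ (stopBelow f c) h := by
  intro y
  by_cases hy : y ≤ c
  · simp only [stopBelow, if_pos hy, ← Finset.sum_mul, sum_measure_singleton,
      Finset.coe_univ, measure_univ, one_mul]
  · simp only [stopBelow, if_neg hy, hharm y]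

lemma measurableSet_letters_eq {Ω : Type*} [MeasurableSpace ι] [MeasurableSingletonClass ι]
    {g : ℕ → Ω → ι} (w : ℕ → ι) (n N : ℕ) :
    MeasurableSet[⨆ k ∈ Ici n, MeasurableSpace.comap (g k) ‹_›]
      {ω | ∀ j < N, g (n + j) ω = w j} := by
  simp only [ofPred_forall]
  refine MeasurableSet.iInter fun j => MeasurableSet.iInter fun _ =>
    (comap_measurable (g (n + j))).mono ?_ le_rfl (measurableSet_singleton (w j))
  exact le_iSup₂ (f := fun k (_ : k ∈ Ici n) => MeasurableSpace.comap (g k) _) (n + j)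
    (mem_Ici.2 (Nat.le_add_right n j))

section Letters

variable {Ω : Type*} [MeasurableSpace Ω] [MeasurableSpace ι] {g : ℕ → Ω → ι} {P : Measure Ω}
  {μ : Measure ι}

def letterFiltration (hg : ∀ n, Measurable (g n)) : Filtration ℕ ‹MeasurableSpace Ω› where
  seq n := ⨆ k ∈ Iio n, MeasurableSpace.comap (g k) ‹_›
  mono' m n hmn := by
    dsimp only
    exact biSup_mono fun k (hk : k < m) => (lt_of_lt_of_le hk hmn : k < n)
  le' _ := iSup₂_le fun k _ => (hg k).comap_le

lemma comap_le_letterFiltration (hg : ∀ n, Measurable (g n)) {k n : ℕ} (hkn : k < n) :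
    MeasurableSpace.comap (g k) ‹_› ≤ letterFiltration hg n :=
  le_iSup₂ (f := fun k (_ : k ∈ Iio n) => MeasurableSpace.comap (g k) _) k hkn

lemma indep_iSup_ge_letterFiltration (hg : ∀ n, Measurable (g n)) (hindep : iIndepFun g P)
    (n : ℕ) : Indep (⨆ k ∈ Ici n, MeasurableSpace.comap (g k) ‹_›) (letterFiltration hg n) P :=
  indep_iSup_of_disjoint (fun k => (hg k).comap_le) ((iIndepFun_iff_iIndep _ _ _).1 hindep)
    (Set.disjoint_left.2 fun _ hk hk' => (not_lt.2 (mem_Ici.1 hk)) hk')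

lemma indep_comap_letterFiltration (hg : ∀ n, Measurable (g n)) (hindep : iIndepFun g P)
    (n : ℕ) : Indep (MeasurableSpace.comap (g n) ‹_›) (letterFiltration hg n) P :=
  indep_of_indep_of_le_left (indep_iSup_ge_letterFiltration hg hindep n)
    (le_iSup₂ (f := fun k (_ : k ∈ Ici n) => MeasurableSpace.comap (g k) _) n (mem_Ici.2 le_rfl))

variable [MeasurableSingletonClass ι]

lemma measure_letters_eq_prod (hg : ∀ n, Measurable (g n)) (hindep : iIndepFun g P)
    (hlaw : ∀ n, P.map (g n) = μ) (w : ℕ → ι) (n N : ℕ) :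
    P {ω | ∀ j < N, g (n + j) ω = w j} = ∏ j ∈ Finset.range N, μ {w j} := by
  have hset : {ω | ∀ j < N, g (n + j) ω = w j} = ⋂ j ∈ Finset.range N, g (n + j) ⁻¹' {w j} := by
    ext ω
    simp
  rw [hset, (hindep.precomp (add_right_injective n)).measure_inter_preimage_eq_mul _
    fun j _ => measurableSet_singleton (w j)]
  refine Finset.prod_congr rfl fun j _ => ?_
  rw [← Measure.map_apply (hg _) (measurableSet_singleton _), hlaw]

lemma measurable_orbit_letterFiltration [Countable ι] (hg : ∀ n, Measurable (g n))
    (hf : ∀ i, Measurable (f i)) (x : ℝ) (n : ℕ) :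
    Measurable[letterFiltration hg n] fun ω => orbit f (fun k => g k ω) x n := by
  induction n with
  | zero => exact measurable_const
  | succ n ih =>
    have hjoint : Measurable fun p : ℝ × ι => f p.2 p.1 := measurable_from_prod_countable_left hf
    exact hjoint.comp ((ih.mono ((letterFiltration hg).mono n.le_succ) le_rfl).prodMk
      ((comap_measurable (g n)).mono (comap_le_letterFiltration hg n.lt_succ_self) le_rfl))

variable [Fintype ι]

lemma lintegral_comp_letter (hg : ∀ n, Measurable (g n)) (hindep : iIndepFun g P)
    (hlaw : ∀ n, P.map (g n) = μ) {β : Type*} [MeasurableSpace β] {n : ℕ} {Y : Ω → β}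
    (hY : Measurable[letterFiltration hg n] Y) {φ : ι → β → ℝ≥0∞} (hφ : ∀ i, Measurable (φ i)) :
    ∫⁻ ω, φ (g n ω) (Y ω) ∂P = ∫⁻ ω, ∑ i, μ {i} * φ i (Y ω) ∂P := by
  have hsplit : ∀ ω, φ (g n ω) (Y ω) = ∑ i, (g n ⁻¹' {i}).indicator 1 ω * φ i (Y ω) := by
    intro ω
    rw [Finset.sum_eq_single_of_mem (g n ω) (Finset.mem_univ _) fun i _ hi => by
      simp [Set.indicator_of_notMem, Ne.symm hi]]
    simp
  have hφY : ∀ i, Measurable[letterFiltration hg n] fun ω => φ i (Y ω) := fun i => (hφ i).comp hY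
  have hφY' : ∀ i, Measurable fun ω => φ i (Y ω) :=
    fun i => (hφY i).mono ((letterFiltration hg).le n) le_rfl
  have hind : ∀ i, Measurable[MeasurableSpace.comap (g n) ‹_›] ((g n ⁻¹' {i}).indicator 1) :=
    fun i => (measurable_const (a := (1 : ℝ≥0∞))).indicator
      (comap_measurable (g n) (measurableSet_singleton i))
  simp_rw [hsplit]
  rw [lintegral_finsetSum _ fun i _ => by exact ((hind i).mono (hg n).comap_le le_rfl).mul (hφY' i),
    lintegral_finsetSum _ fun i _ => (hφY' i).const_mul _]
  refine Finset.sum_congr rfl fun i _ => ?_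
  rw [lintegral_mul_eq_lintegral_mul_lintegral_of_independent_measurableSpace (hg n).comap_le
    ((letterFiltration hg).le n) (indep_comap_letterFiltration hg hindep n) (hind i) (hφY i),
    lintegral_indicator_one (hg n (measurableSet_singleton i)), lintegral_const_mul _ (hφY' i),
    ← Measure.map_apply (hg n) (measurableSet_singleton i), hlaw]

lemma IsHarmonic.lintegral_orbit [IsProbabilityMeasure P] {h : ℝ → ℝ≥0∞}
    (hharm : IsHarmonic μ f h) (hh : Measurable h) (hg : ∀ n, Measurable (g n))
    (hindep : iIndepFun g P) (hlaw : ∀ n, P.map (g n) = μ) (hf : ∀ i, Measurable (f i))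
    (x : ℝ) (n : ℕ) :
    ∫⁻ ω, h (orbit f (fun k => g k ω) x n) ∂P = h x := by
  induction n with
  | zero => simp [orbit]
  | succ n ih =>
    rw [← ih]
    exact (lintegral_comp_letter hg hindep hlaw (measurable_orbit_letterFiltration hg hf x n)
      fun i => hh.comp (hf i)).trans (by simp only [Function.comp_apply, hharm _])

/-- Optional stopping for the martingale `h (orbit n)`, in the form of a Markov inequality. -/
lemma IsHarmonic.mul_measure_exists_orbit_le [IsProbabilityMeasure P] {h : ℝ → ℝ≥0∞}
    (hharm : IsHarmonic μ f h) (hh : Antitone h) (hg : ∀ n, Measurable (g n))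
    (hindep : iIndepFun g P) (hlaw : ∀ n, P.map (g n) = μ) (hf : ∀ i, Measurable (f i))
    (x c : ℝ) :
    h c * P {ω | ∃ n, orbit f (fun k => g k ω) x n ≤ c} ≤ h x := by
  have : IsProbabilityMeasure μ := hlaw 0 ▸ Measure.isProbabilityMeasure_map (hg 0).aemeasurable
  have hstop : ∀ i, Measurable (stopBelow f c i) := fun i =>
    Measurable.ite measurableSet_Iic measurable_id (hf i)
  have hunion : {ω | ∃ n, orbit f (fun k => g k ω) x n ≤ c} =
      ⋃ n, {ω | ∃ k ≤ n, orbit f (fun k => g k ω) x k ≤ c} := by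
    ext ω
    simp only [mem_ofPred_eq, mem_iUnion]
    exact ⟨fun ⟨n, hn⟩ => ⟨n, n, le_rfl, hn⟩, fun ⟨_, k, _, hk⟩ => ⟨k, hk⟩⟩
  have hmono : Monotone fun n => {ω | ∃ k ≤ n, orbit f (fun k => g k ω) x k ≤ c} :=
    fun _ _ hmn _ ⟨k, hk, hle⟩ => ⟨k, hk.trans hmn, hle⟩
  rw [hunion, hmono.measure_iUnion, ENNReal.mul_iSup]
  refine iSup_le fun n => ?_
  calc h c * P {ω | ∃ k ≤ n, orbit f (fun k => g k ω) x k ≤ c}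
      ≤ h c * P {ω | h c ≤ h (orbit (stopBelow f c) (fun k => g k ω) x n)} :=
        mul_le_mul_right (measure_mono fun _ hω => hh (orbit_stopBelow_le hω)) _
    _ ≤ ∫⁻ ω, h (orbit (stopBelow f c) (fun k => g k ω) x n) ∂P :=
        mul_meas_ge_le_lintegral₀ (hh.measurable.comp
          ((measurable_orbit_letterFiltration hg hstop x n).mono
            ((letterFiltration hg).le n) le_rfl)).aemeasurable _
    _ = h x := (isHarmonic_stopBelow hharm c).lintegral_orbit hh.measurable hg hindep hlaw hstop x n

lemma ae_eventually_lt_orbit [IsProbabilityMeasure P] (hg : ∀ n, Measurable (g n))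
    (hindep : iIndepFun g P) (hlaw : ∀ n, P.map (g n) = μ) (hfc : ∀ i, Continuous (f i))
    (hfm : ∀ i, Monotone (f i)) (hdec : ∀ y, 0 < μ {i | f i y < y}) (x c M : ℝ) :
    ∀ᵐ ω ∂P, (∀ n, c < orbit f (fun k => g k ω) x n) →
      ∀ᶠ n in atTop, M < orbit f (fun k => g k ω) x n := by
  have : IsFiniteMeasure μ := hlaw 0 ▸ P.isFiniteMeasure_map (g 0)
  set X : ℕ → Ω → ℝ := fun n ω => orbit f (fun k => g k ω) x n
  have hX : ∀ n, Measurable[letterFiltration hg n] (X n) := fun n =>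
    measurable_orbit_letterFiltration hg (fun i => (hfm i).measurable) x n
  have hS : ∀ y, ∃ i ∈ Finset.univ.filter fun i => μ {i} ≠ 0, f i y < y := fun y =>
    let ⟨i, hi, hne⟩ := exists_mem_measure_singleton_ne_zero (hdec y).ne'
    ⟨i, Finset.mem_filter.2 ⟨Finset.mem_univ i, hne⟩, hi⟩
  obtain ⟨w, N, hwS, hwc⟩ := exists_orbit_lt hfc hS c M
  have hq : 0 < (∏ j ∈ Finset.range N, μ {w j}).toReal :=
    ENNReal.toReal_pos (Finset.prod_ne_zero_iff.2 fun j _ => (Finset.mem_filter.1 (hwS j)).2)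
      (ENNReal.prod_ne_top fun j _ => measure_ne_top μ _)
  have hWq : ∀ n, (∏ j ∈ Finset.range N, μ {w j}).toReal ≤
      P.real {ω | ∀ j < N, g (n + j) ω = w j} := fun n => by
    rw [measureReal_def, measure_letters_eq_prod hg hindep hlaw]
  have hexit : ∀ n, Disjoint ({ω | X n ω ≤ M} ∩ {ω | ∀ j < N, g (n + j) ω = w j})
      {ω | ∀ n, c < X n ω} := by
    refine fun n => Set.disjoint_left.2 fun ω ⟨hM, hw⟩ hE => (hE (n + N)).not_gt ?_
    exact (orbit_add_le_of_eq (u := fun k => g k ω) hfm hw hM).trans_lt hwc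
  have hE : MeasurableSet[⨆ n, letterFiltration hg n] {ω | ∀ n, c < X n ω} := by
    simp only [ofPred_forall]
    exact MeasurableSet.iInter fun n =>
      (hX n).mono (le_iSup (fun n => (letterFiltration hg n : MeasurableSpace Ω)) n) le_rfl
        measurableSet_Ioi
  filter_upwards [ae_eventually_notMem_of_indep (fun n => iSup₂_le fun k _ => (hg k).comap_le)
    (indep_iSup_ge_letterFiltration hg hindep) hE (fun n => hX n measurableSet_Iic)
    (fun n => measurableSet_letters_eq w n N) hq hWq hexit] with ω hω hE
  filter_upwards [hω hE] with n hn
  exact not_le.1 hn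

lemma ae_tendsto_orbit_atTop [IsProbabilityMeasure P] (hg : ∀ n, Measurable (g n))
    (hindep : iIndepFun g P) (hlaw : ∀ n, P.map (g n) = μ) (hfc : ∀ i, Continuous (f i))
    (hfm : ∀ i, Monotone (f i)) (hdec : ∀ y, 0 < μ {i | f i y < y}) {h : ℝ → ℝ≥0∞}
    (hharm : IsHarmonic μ f h) (hh : Antitone h) (hbot : Tendsto h atBot (𝓝 ⊤)) {x : ℝ}
    (hx : h x ≠ ⊤) :
    ∀ᵐ ω ∂P, Tendsto (fun n => orbit f (fun k => g k ω) x n) atTop atTop := by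
  suffices hM : ∀ M : ℕ, ∀ᵐ ω ∂P, ∀ᶠ n in atTop, (M : ℝ) < orbit f (fun k => g k ω) x n by
    filter_upwards [ae_all_iff.2 hM] with ω hω
    exact tendsto_atTop.2 fun b => (hω ⌈b⌉₊).mono fun n hn => (Nat.le_ceil b).trans hn.le
  intro M
  set B := {ω | ¬ ∀ᶠ n in atTop, (M : ℝ) < orbit f (fun k => g k ω) x n}
  have hB : ∀ c, h c * P B ≤ h x := fun c =>
    calc h c * P B ≤ h c * P {ω | ∃ n, orbit f (fun k => g k ω) x n ≤ c} := by
          refine mul_le_mul_right (measure_mono_ae ?_) _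
          filter_upwards [ae_eventually_lt_orbit hg hindep hlaw hfc hfm hdec x c M] with ω hω hB
          by_contra hnot
          exact hB (hω fun n => not_le.1 fun hn => hnot ⟨n, hn⟩)
      _ ≤ h x :=
          hharm.mul_measure_exists_orbit_le hh hg hindep hlaw (fun i => (hfm i).measurable) x c
  rw [ae_iff]
  by_contra hne
  obtain ⟨c, hc⟩ := (hbot.eventually (lt_mem_nhds (ENNReal.div_lt_top hx hne))).exists
  exact ((ENNReal.le_div_iff_mul_le (Or.inl hne) (Or.inl (measure_ne_top P B))).2 (hB c)).not_gt hc

end Letters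

end RandomOrbit

theorem rds_semiinfinite_stationary_implies_phiPlus_one_general
    {Ω : Type*} [MeasurableSpace Ω] (P : Measure Ω) [IsProbabilityMeasure P]
    {ι : Type*} [Fintype ι] [MeasurableSpace ι] [MeasurableSingletonClass ι]
    (f : ι → ℝ → ℝ)
    (hf : ∀ i, StrictMono (f i) ∧ Function.Bijective (f i))
    (g : ℕ → Ω → ι) (hgmeas : ∀ n, Measurable (g n))
    (hindep : iIndepFun g P)
    (μ : Measure ι) (hlaw : ∀ n, Measure.map (g n) P = μ)
    (F : ℕ → Ω → ℝ → ℝ)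
    (hF0 : ∀ ω x, F 0 ω x = x)
    (hFS : ∀ n ω x, F (n + 1) ω x = f (g n ω) (F n ω x))
    (hshift : ∀ x : ℝ, 0 < μ {i | f i x < x} ∧ 0 < μ {i | x < f i x})
    (ν : Measure ℝ)
    (hfin : ∀ x : ℝ, ν (Set.Ici x) < ⊤)
    (hinf : ∀ x : ℝ, ν (Set.Iic x) = ⊤)
    (hstat : ∀ A : Set ℝ, MeasurableSet A → ν A = ∑ i, μ {i} * ν (f i '' A)) :
    ∀ x : ℝ, P {ω | Tendsto (fun n => F n ω x) atTop atTop} = 1 := by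
  intro x
  have hfm : ∀ i, Monotone (f i) := fun i => (hf i).1.monotone
  have hfc : ∀ i, Continuous (f i) := fun i => (hfm i).continuous_of_surjective (hf i).2.2
  have himage : ∀ i y, f i '' Ici y = Ici (f i y) := fun i y => by
    rw [← (hf i).1.coe_orderIsoOfSurjective (f i) (hf i).2.2, OrderIso.image_Ici]
  have hharm : RandomOrbit.IsHarmonic μ f fun y => ν (Ici y) := fun y => by
    dsimp only
    rw [hstat (Ici y) measurableSet_Ici]
    simp only [himage]
  have hbot : Tendsto (fun y => ν (Ici y)) atBot (𝓝 ⊤) := by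
    simpa [measure_mono_top (subset_univ _) (hinf 0)] using tendsto_measure_Ici_atBot ν
  have hF : ∀ ω n, F n ω x = RandomOrbit.orbit f (fun k => g k ω) x n := fun ω n => by
    induction n with
    | zero => exact hF0 ω x
    | succ n ih => rw [hFS, ih, RandomOrbit.orbit]
  have hae := RandomOrbit.ae_tendsto_orbit_atTop hgmeas hindep hlaw hfc hfm (fun y => (hshift y).1)
    hharm (fun _ _ hab => measure_mono (Ici_subset_Ici.2 hab)) hbot (hfin x).ne
  simp_rw [hF]
  exact (measure_congr (ae_eq_univ.2 (ae_iff.1 hae))).trans measure_univ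

/-- under shiftability, if the inverse dynamics has a semi-infinite Radon
stationary measure (finite on right half-lines, infinite on left half-lines), then for
the forward dynamics every orbit tends to +∞ almost surely. -/
theorem rds_semiinfinite_stationary_implies_phiPlus_one
    {Ω : Type*} [MeasurableSpace Ω] (P : Measure Ω) [IsProbabilityMeasure P]
    {ι : Type*} [Fintype ι] [MeasurableSpace ι] [MeasurableSingletonClass ι]
    (f : ι → ℝ → ℝ)
    (hf : ∀ i, StrictMono (f i) ∧ Function.Bijective (f i))
    (g : ℕ → Ω → ι) (hgmeas : ∀ n, Measurable (g n))
    (hindep : iIndepFun g P)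
    (μ : Measure ι) [IsProbabilityMeasure μ] (hlaw : ∀ n, Measure.map (g n) P = μ)
    (F : ℕ → Ω → ℝ → ℝ)
    (hF0 : ∀ ω x, F 0 ω x = x)
    (hFS : ∀ n ω x, F (n + 1) ω x = f (g n ω) (F n ω x))
    (hshift : ∀ x : ℝ, 0 < μ {i | f i x < x} ∧ 0 < μ {i | x < f i x})
    (ν : Measure ℝ)
    (hfin : ∀ x : ℝ, ν (Set.Ici x) < ⊤)
    (hinf : ∀ x : ℝ, ν (Set.Iic x) = ⊤)
    (hstat : ∀ A : Set ℝ, MeasurableSet A → ν A = ∑ i, μ {i} * ν (f i '' A)) :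
    ∀ x : ℝ, P {ω | Tendsto (fun n => F n ω x) atTop atTop} = 1 :=
  rds_semiinfinite_stationary_implies_phiPlus_one_general P f hf g hgmeas hindep μ hlaw F hF0 hFS
    hshift ν hfin hinf hstat
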